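/- arXiv:2605.27106 — 3 statements merged into one kernel-verified Lean document; each statement's English description precedes it below -/
import Mathlib

section
/- Let L be a laminar family of subsets of a finite ground set E (any two members are nested or disjoint), with a positive capacity C_v assigned to each member. Define f(S) for S ⊆ E as the minimum over antichains A ⊆ L whose union covers S of the sum of capacities of members of A (and f(S) = +∞ treated as excluded when no such antichain exists; assume the full ground set is a member of L so covers always exist). Then f is normalized (f(∅)=0), monotone, and submodular. -/
/-!
Let `A` and `B` be cheapest antichain covers of `S` and `T`, and `U = A ∪ B`. The maximal members
of `U` form an antichain covering `S ∪ T`. By laminarity, a point of `S ∩ T` lies in nested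
members `X ∈ A`, `Y ∈ B`; the smaller one is either common to `A` and `B` or not maximal in `U`.
So the non-maximal members of `U` together with `A ∩ B` cover `S ∩ T`, and the maximal members of
that family are an antichain cover of `S ∩ T`. As capacities are nonnegative, the two new covers
together cost at most `∑ U + ∑ (A ∩ B) = ∑ A + ∑ B`.
-/

open Finset

variable {α : Type*}

section Maximals

variable {β : Type*} [PartialOrder β]

open Classical in
noncomputable def maximals (K : Finset β) : Finset β :=
  K.filter (Maximal (· ∈ K))

variable {K : Finset β} {X Y : β}

theorem mem_maximals : X ∈ maximals K ↔ Maximal (· ∈ K) X := by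
  classical
  rw [maximals, mem_filter]
  exact and_iff_right_of_imp Maximal.prop

theorem maximals_subset (K : Finset β) : maximals K ⊆ K :=
  fun _ hX ↦ (mem_maximals.1 hX).prop

theorem isAntichain_maximals (K : Finset β) : IsAntichain (· ≤ ·) (maximals K : Set β) :=
  (setOfPred_maximal_antichain _).subset fun _ hX ↦ mem_maximals.1 hX

theorem mem_sdiff_maximals_of_lt [DecidableEq β] (hX : X ∈ K) (hY : Y ∈ K) (hXY : X < Y) :
    X ∈ K \ maximals K :=
  mem_sdiff.2 ⟨hX, fun hmax ↦ hXY.not_ge ((mem_maximals.1 hmax).2 hY hXY.le)⟩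

theorem biUnion_maximals [DecidableEq α] (K : Finset (Finset α)) :
    (maximals K).biUnion id = K.biUnion id := by
  refine (biUnion_subset_biUnion_of_subset_left _ (maximals_subset K)).antisymm ?_
  intro e he
  obtain ⟨X, hX, heX⟩ := mem_biUnion.1 he
  obtain ⟨Y, hXY, hY⟩ := K.exists_le_maximal hX
  exact mem_biUnion.2 ⟨Y, mem_maximals.2 hY, hXY heX⟩

end Maximals

theorem isAntichain_subset_coe_iff {A : Finset (Finset α)} :
    IsAntichain (· ⊆ ·) (A : Set (Finset α)) ↔
      ∀ X ∈ A, ∀ Y ∈ A, X ≠ Y → ¬ X ⊆ Y ∧ ¬ Y ⊆ X :=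
  ⟨fun h _ hX _ hY hne ↦ ⟨h hX hY hne, h hY hX hne.symm⟩,
    fun h _ hX _ hY hne ↦ (h _ hX _ hY hne).1⟩

variable [DecidableEq α]

def IsLaminar (L : Finset (Finset α)) : Prop :=
  ∀ X ∈ L, ∀ Y ∈ L, X ⊆ Y ∨ Y ⊆ X ∨ X ∩ Y = ∅

theorem IsLaminar.subset_or_subset_of_mem {L : Finset (Finset α)} (hL : IsLaminar L)
    {X Y : Finset α} (hX : X ∈ L) (hY : Y ∈ L) {e : α} (heX : e ∈ X) (heY : e ∈ Y) :
    X ⊆ Y ∨ Y ⊆ X :=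
  (hL X hX Y hY).imp_right fun h ↦ h.resolve_right fun hXY ↦
    by simpa [hXY] using mem_inter.2 ⟨heX, heY⟩

def IsAntichainCover (L : Finset (Finset α)) (S : Finset α) (A : Finset (Finset α)) : Prop :=
  A ⊆ L ∧ IsAntichain (· ⊆ ·) (A : Set (Finset α)) ∧ S ⊆ A.biUnion id

/-- Junk value `0` when `S` has no antichain cover in `L`, as `sInf ∅ = 0`. -/
noncomputable def minCoverCost (L : Finset (Finset α)) (C : Finset α → ℝ) (S : Finset α) : ℝ :=
  sInf {x | ∃ A, IsAntichainCover L S A ∧ x = ∑ X ∈ A, C X}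

section MinCoverCost

variable {L : Finset (Finset α)} {C : Finset α → ℝ} {S T : Finset α}

theorem minCoverCost_le_sum (hC : ∀ X ∈ L, 0 ≤ C X) {A : Finset (Finset α)} (hAL : A ⊆ L)
    (hSA : S ⊆ A.biUnion id) : minCoverCost L C S ≤ ∑ X ∈ A, C X := by
  have hbdd : BddBelow {x | ∃ A, IsAntichainCover L S A ∧ x = ∑ X ∈ A, C X} :=
    ⟨0, by rintro _ ⟨B, hB, rfl⟩; exact sum_nonneg fun X hX ↦ hC X (hB.1 hX)⟩
  calc minCoverCost L C S ≤ ∑ X ∈ maximals A, C X :=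
        csInf_le hbdd ⟨maximals A, ⟨(maximals_subset A).trans hAL, isAntichain_maximals A,
          (biUnion_maximals A).symm ▸ hSA⟩, rfl⟩
    _ ≤ ∑ X ∈ A, C X :=
        sum_le_sum_of_subset_of_nonneg (maximals_subset A) fun X hX _ ↦ hC X (hAL hX)

theorem exists_isAntichainCover_sum_eq_minCoverCost [Fintype α] (huniv : univ ∈ L) :
    ∃ A, IsAntichainCover L S A ∧ ∑ X ∈ A, C X = minCoverCost L C S := by
  have hne : {x | ∃ A, IsAntichainCover L S A ∧ x = ∑ X ∈ A, C X}.Nonempty :=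
    ⟨_, {univ}, ⟨by simpa using huniv, by simp, by simp⟩, rfl⟩
  have hfin : {x | ∃ A, IsAntichainCover L S A ∧ x = ∑ X ∈ A, C X}.Finite :=
    (Set.finite_range fun A : Finset (Finset α) ↦ ∑ X ∈ A, C X).subset
      fun _ ⟨A, _, hx⟩ ↦ ⟨A, hx.symm⟩
  obtain ⟨A, hA, hsum⟩ := hne.csInf_mem hfin
  exact ⟨A, hA, hsum.symm⟩

theorem minCoverCost_empty (hC : ∀ X ∈ L, 0 ≤ C X) : minCoverCost L C ∅ = 0 := by
  refine le_antisymm (by simpa using minCoverCost_le_sum (S := ∅) hC (empty_subset L) le_rfl) ?_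
  refine le_csInf ⟨0, ∅, ⟨empty_subset L, by simp, le_rfl⟩, by simp⟩ ?_
  rintro _ ⟨A, hA, rfl⟩
  exact sum_nonneg fun X hX ↦ hC X (hA.1 hX)

theorem minCoverCost_mono [Fintype α] (hC : ∀ X ∈ L, 0 ≤ C X) (huniv : univ ∈ L)
    (hST : S ⊆ T) : minCoverCost L C S ≤ minCoverCost L C T := by
  obtain ⟨A, ⟨hAL, -, hTA⟩, hA⟩ :=
    exists_isAntichainCover_sum_eq_minCoverCost (S := T) (C := C) huniv
  exact hA ▸ minCoverCost_le_sum hC hAL (hST.trans hTA)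

theorem IsLaminar.inter_subset_biUnion_sdiff_maximals_union_inter (hL : IsLaminar L)
    {A B : Finset (Finset α)} (hAL : A ⊆ L) (hBL : B ⊆ L) (hSA : S ⊆ A.biUnion id)
    (hTB : T ⊆ B.biUnion id) :
    S ∩ T ⊆ ((A ∪ B) \ maximals (A ∪ B) ∪ A ∩ B).biUnion id := by
  intro e he
  obtain ⟨X, hXA, heX⟩ := mem_biUnion.1 (hSA (mem_inter.1 he).1)
  obtain ⟨Y, hYB, heY⟩ := mem_biUnion.1 (hTB (mem_inter.1 he).2)
  have hXU : X ∈ A ∪ B := mem_union_left _ hXA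
  have hYU : Y ∈ A ∪ B := mem_union_right _ hYB
  rcases eq_or_ne X Y with rfl | hne
  · exact mem_biUnion.2 ⟨X, mem_union_right _ (mem_inter.2 ⟨hXA, hYB⟩), heX⟩
  rcases hL.subset_or_subset_of_mem (hAL hXA) (hBL hYB) heX heY with hXY | hYX
  · exact mem_biUnion.2 ⟨X, mem_union_left _
      (mem_sdiff_maximals_of_lt hXU hYU (hXY.ssubset_of_ne hne)), heX⟩
  · exact mem_biUnion.2 ⟨Y, mem_union_left _
      (mem_sdiff_maximals_of_lt hYU hXU (hYX.ssubset_of_ne hne.symm)), heY⟩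

theorem IsLaminar.minCoverCost_union_add_inter_le [Fintype α] (hL : IsLaminar L)
    (hC : ∀ X ∈ L, 0 ≤ C X) (huniv : univ ∈ L) :
    minCoverCost L C (S ∪ T) + minCoverCost L C (S ∩ T) ≤
      minCoverCost L C S + minCoverCost L C T := by
  obtain ⟨A, ⟨hAL, -, hSA⟩, hA⟩ :=
    exists_isAntichainCover_sum_eq_minCoverCost (S := S) (C := C) huniv
  obtain ⟨B, ⟨hBL, -, hTB⟩, hB⟩ :=
    exists_isAntichainCover_sum_eq_minCoverCost (S := T) (C := C) huniv
  set U := A ∪ B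
  have hUL : U ⊆ L := union_subset hAL hBL
  have hunion : minCoverCost L C (S ∪ T) ≤ ∑ X ∈ maximals U, C X :=
    minCoverCost_le_sum hC ((maximals_subset U).trans hUL)
      (by rw [biUnion_maximals, union_biUnion]; exact union_subset_union hSA hTB)
  have hinter : minCoverCost L C (S ∩ T) ≤ ∑ X ∈ U \ maximals U ∪ A ∩ B, C X :=
    minCoverCost_le_sum hC
      (union_subset (sdiff_subset.trans hUL) (inter_subset_left.trans hAL))
      (hL.inter_subset_biUnion_sdiff_maximals_union_inter hAL hBL hSA hTB)
  have hrest : ∑ X ∈ U \ maximals U ∪ A ∩ B, C X ≤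
      ∑ X ∈ U \ maximals U, C X + ∑ X ∈ A ∩ B, C X := by
    rw [← sum_union_inter]
    exact le_add_of_nonneg_right <| sum_nonneg fun X hX ↦ hC X <|
      hUL (sdiff_subset (mem_inter.1 hX).1)
  calc minCoverCost L C (S ∪ T) + minCoverCost L C (S ∩ T)
      ≤ ∑ X ∈ maximals U, C X + (∑ X ∈ U \ maximals U, C X + ∑ X ∈ A ∩ B, C X) :=
        add_le_add hunion (hinter.trans hrest)
    _ = ∑ X ∈ U, C X + ∑ X ∈ A ∩ B, C X := by
        rw [← add_assoc, add_comm (∑ X ∈ maximals U, C X), sum_sdiff (maximals_subset U)]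
    _ = minCoverCost L C S + minCoverCost L C T := by rw [sum_union_inter, hA, hB]

end MinCoverCost

/-- **Laminar rank function is normalized, monotone, submodular.**
`L` is a laminar family on finite ground set `E` with positive capacities `C`,
containing the full ground set; `f S` is the infimum over antichains `A ⊆ L`
covering `S` of the total capacity of `A`. -/
theorem laminar_rank_normalized_monotone_submodular
    (E : Type) [Fintype E] [DecidableEq E]
    (L : Finset (Finset E))
    (hlam : ∀ X ∈ L, ∀ Y ∈ L, X ⊆ Y ∨ Y ⊆ X ∨ X ∩ Y = ∅)
    (C : Finset E → ℝ) (hC : ∀ X ∈ L, 0 < C X)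
    (huniv : Finset.univ ∈ L)
    (f : Finset E → ℝ)
    (hf : ∀ S : Finset E, f S = sInf {x : ℝ | ∃ A : Finset (Finset E),
        A ⊆ L ∧ (∀ X ∈ A, ∀ Y ∈ A, X ≠ Y → ¬ X ⊆ Y ∧ ¬ Y ⊆ X) ∧
        S ⊆ A.biUnion id ∧ x = ∑ X ∈ A, C X}) :
    f ∅ = 0 ∧
    (∀ S T : Finset E, S ⊆ T → f S ≤ f T) ∧
    (∀ S T : Finset E, f (S ∪ T) + f (S ∩ T) ≤ f S + f T) := by
  obtain rfl : f = minCoverCost L C := funext fun S ↦ by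
    simp only [hf, minCoverCost, IsAntichainCover, isAntichain_subset_coe_iff, and_assoc]
  have hC' : ∀ X ∈ L, 0 ≤ C X := fun X hX ↦ (hC X hX).le
  exact ⟨minCoverCost_empty hC', fun _ _ ↦ minCoverCost_mono hC' huniv,
    fun _ _ ↦ IsLaminar.minCoverCost_union_add_inter_le hlam hC' huniv⟩
end

section
/- For a polymatroid P(f) on ground set E with normalized monotone submodular rank function f, the greedy algorithm with respect to any linear objective with nonnegative weights w, which processes coordinates in order of decreasing weight and sets x_{e_i} = f({e_1,…,e_i}) − f({e_1,…,e_{i−1}}), produces a point of P(f) that maximizes Σ_e w_e x_e over P(f). -/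
/-- **Edmonds' greedy theorem for polymatroids.**
With ground set `Fin n` indexed in order of decreasing weight `w`, the greedy
point `x i = f(Iic i) − f(Iio i)` lies in the polymatroid `P(f)` and
maximizes the linear objective `∑ w i * x i` over `P(f)`. -/
theorem polymatroid_greedy_optimal
    (n : ℕ) (f : Finset (Fin n) → ℝ)
    (hf0 : f ∅ = 0)
    (hfmono : ∀ S T : Finset (Fin n), S ⊆ T → f S ≤ f T)
    (hfsub : ∀ S T : Finset (Fin n), f (S ∪ T) + f (S ∩ T) ≤ f S + f T)
    (w : Fin n → ℝ) (hw : ∀ i, 0 ≤ w i)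
    (hsorted : ∀ i j : Fin n, i ≤ j → w j ≤ w i)
    (x : Fin n → ℝ)
    (hx : ∀ i : Fin n, x i = f (Finset.Iic i) - f (Finset.Iio i)) :
    ((∀ i, 0 ≤ x i) ∧ (∀ S : Finset (Fin n), ∑ e ∈ S, x e ≤ f S)) ∧
    (∀ y : Fin n → ℝ, (∀ i, 0 ≤ y i) →
      (∀ S : Finset (Fin n), ∑ e ∈ S, y e ≤ f S) →
      ∑ i, w i * y i ≤ ∑ i, w i * x i) := by
  -- nonnegativity
  have hxnn : ∀ i, 0 ≤ x i := by
    intro i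
    rw [hx i]
    have := hfmono (Finset.Iio i) (Finset.Iic i) Finset.Iio_subset_Iic_self
    linarith
  -- feasibility
  have hxfeas : ∀ S : Finset (Fin n), ∑ e ∈ S, x e ≤ f S := by
    intro S
    induction S using Finset.strongInduction with
    | _ S ih =>
      rcases Finset.eq_empty_or_nonempty S with rfl | hS
      · simp [hf0]
      · set m := S.max' hS with hm
        have hmS : m ∈ S := S.max'_mem hS
        have hle : ∀ j ∈ S, j ≤ m := fun j hj => S.le_max' j hj
        have h1 : S ∪ Finset.Iio m = Finset.Iic m := by
          ext j
          simp only [Finset.mem_union, Finset.mem_Iio, Finset.mem_Iic]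
          constructor
          · rintro (hj | hj)
            · exact hle j hj
            · exact le_of_lt hj
          · intro hj
            rcases lt_or_eq_of_le hj with h | h
            · exact Or.inr h
            · exact Or.inl (h ▸ hmS)
        have h2 : S ∩ Finset.Iio m = S.erase m := by
          ext j
          simp only [Finset.mem_inter, Finset.mem_Iio, Finset.mem_erase]
          constructor
          · rintro ⟨hj, hj'⟩
            exact ⟨ne_of_lt hj', hj⟩
          · rintro ⟨hne, hj⟩
            exact ⟨hj, lt_of_le_of_ne (hle j hj) hne⟩
        have hsub := hfsub S (Finset.Iio m)
        rw [h1, h2] at hsub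
        have ihe := ih (S.erase m) (Finset.erase_ssubset hmS)
        have hsum : ∑ e ∈ S, x e = x m + ∑ e ∈ S.erase m, x e :=
          (Finset.add_sum_erase S x hmS).symm
        rw [hsum, hx m]
        linarith
  -- partial sums over Iio
  have hIio : ∀ j : Fin n, ∑ i ∈ Finset.Iio j, x i = f (Finset.Iio j) := by
    suffices H : ∀ k (j : Fin n), (j : ℕ) = k →
        ∑ i ∈ Finset.Iio j, x i = f (Finset.Iio j) by
      exact fun j => H j.val j rfl
    intro k
    induction k with
    | zero =>
      intro j hj
      have he : Finset.Iio j = ∅ := by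
        ext i
        simp only [Finset.mem_Iio, Finset.notMem_empty, iff_false, Fin.lt_def, hj]
        omega
      simp [he, hf0]
    | succ k IH =>
      intro j hj
      have hk' : k < n := by
        have := j.isLt
        omega
      set j' : Fin n := ⟨k, hk'⟩ with hj'
      have hIio_eq : Finset.Iio j = Finset.Iic j' := by
        ext i
        simp only [Finset.mem_Iio, Finset.mem_Iic, Fin.lt_def, Fin.le_def, hj, hj']
        omega
      rw [hIio_eq, ← Finset.Iio_insert j', Finset.sum_insert (by simp),
        Finset.Iio_insert, IH j' rfl, hx j']
      ring
  -- partial sums over Iic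
  have hIic : ∀ j : Fin n, ∑ i ∈ Finset.Iic j, x i = f (Finset.Iic j) := by
    intro j
    rw [← Finset.Iio_insert j, Finset.sum_insert (by simp), Finset.Iio_insert,
      hIio j, hx j]
    ring
  refine ⟨⟨hxnn, hxfeas⟩, ?_⟩
  intro y hynn hyfeas
  -- weight differences
  set d : Fin n → ℝ :=
    fun j => w j - (if h : (j : ℕ) + 1 < n then w ⟨(j : ℕ) + 1, h⟩ else 0) with hd
  have hdnn : ∀ j, 0 ≤ d j := by
    intro j
    simp only [hd]
    split
    · next h =>
      have := hsorted j ⟨(j : ℕ) + 1, h⟩ (by simp [Fin.le_def])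
      linarith
    · simpa using hw j
  have hdsum : ∀ i : Fin n, ∑ j ∈ Finset.Ici i, d j = w i := by
    suffices H : ∀ k (i : Fin n), n - (i : ℕ) = k →
        ∑ j ∈ Finset.Ici i, d j = w i by
      exact fun i => H (n - i.val) i rfl
    intro k
    induction k using Nat.strong_induction_on with
    | _ k IH =>
      intro i hk
      rw [← Finset.Ioi_insert i, Finset.sum_insert (by simp)]
      by_cases h : (i : ℕ) + 1 < n
      · set i' : Fin n := ⟨(i : ℕ) + 1, h⟩ with hi'
        have hIoi : Finset.Ioi i = Finset.Ici i' := by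
          ext j
          simp only [Finset.mem_Ioi, Finset.mem_Ici, Fin.lt_def, Fin.le_def, hi']
          omega
        have hlt : n - (i' : ℕ) < k := by
          simp only [hi']
          have := i.isLt
          omega
        rw [hIoi, IH (n - (i' : ℕ)) hlt i' rfl]
        simp only [hd, dif_pos h]
        ring
      · have hIoi : Finset.Ioi i = ∅ := by
          ext j
          simp only [Finset.mem_Ioi, Finset.notMem_empty, iff_false, Fin.lt_def]
          have := j.isLt
          omega
        rw [hIoi]
        simp [hd, dif_neg h]
  -- Abel summation
  have swap : ∀ z : Fin n → ℝ,
      ∑ i, w i * z i = ∑ j, d j * ∑ i ∈ Finset.Iic j, z i := by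
    intro z
    have hIci_filter : ∀ i : Fin n,
        Finset.Ici i = Finset.univ.filter (fun j => i ≤ j) := by
      intro i; ext j; simp
    have hIic_filter : ∀ j : Fin n,
        Finset.Iic j = Finset.univ.filter (fun i => i ≤ j) := by
      intro j; ext i; simp
    calc ∑ i, w i * z i
        = ∑ i, (∑ j ∈ Finset.Ici i, d j) * z i := by
          exact Finset.sum_congr rfl fun i _ => by rw [hdsum i]
      _ = ∑ i : Fin n, ∑ j : Fin n, if i ≤ j then d j * z i else 0 := by
          refine Finset.sum_congr rfl fun i _ => ?_
          rw [Finset.sum_mul, hIci_filter i, Finset.sum_filter]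
      _ = ∑ j : Fin n, ∑ i : Fin n, if i ≤ j then d j * z i else 0 :=
          Finset.sum_comm
      _ = ∑ j, d j * ∑ i ∈ Finset.Iic j, z i := by
          refine Finset.sum_congr rfl fun j _ => ?_
          rw [Finset.mul_sum, hIic_filter j, Finset.sum_filter]
  rw [swap y, swap x]
  refine Finset.sum_le_sum fun j _ => ?_
  refine mul_le_mul_of_nonneg_left ?_ (hdnn j)
  rw [hIic j]
  exact hyfeas _
end

section
/- For a Walrasian equilibrium (p*, x*) of an exchange economy with quasilinear utilities — i.e., each agent i's bundle x*_i maximizes v_i(x) − p*·x over feasible bundles, and the allocation is feasible with markets clearing — the allocation x* maximizes total welfare Σ_i v_i(x_i) over all feasible allocations (the first welfare theorem for quasilinear Walrasian equilibrium with finitely many agents and items). -/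
/-- **First welfare theorem for quasilinear Walrasian equilibrium.**
If `(p, x)` is a Walrasian equilibrium — `x` allocates disjoint bundles, each
agent's bundle maximizes quasilinear utility `v a S − p(S)`, and every item
with positive price is allocated — then `x` maximizes total welfare over all
partitions `y` of the items. -/
theorem walrasian_first_welfare
    (A I : Type) [Fintype A] [Fintype I] [DecidableEq I]
    (v : A → Finset I → ℝ) (p : I → ℝ) (x : A → Finset I)
    (hdisj : ∀ a a' : A, a ≠ a' → Disjoint (x a) (x a'))
    (hmax : ∀ a : A, ∀ S : Finset I,
      v a S - ∑ j ∈ S, p j ≤ v a (x a) - ∑ j ∈ x a, p j)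
    (hclear : ∀ j : I, 0 < p j → ∃ a : A, j ∈ x a) :
    ∀ y : A → Finset I, (∀ a a' : A, a ≠ a' → Disjoint (y a) (y a')) →
      (∀ j : I, ∃ a : A, j ∈ y a) →
      ∑ a, v a (y a) ≤ ∑ a, v a (x a) := by
  intro y hydisj hycover
  -- total price of x bundles
  set X : Finset I := Finset.univ.biUnion x with hX
  have hxsum : ∑ a, ∑ j ∈ x a, p j = ∑ j ∈ X, p j := by
    rw [hX, Finset.sum_biUnion]
    intro a _ a' _ h
    exact hdisj a a' h
  have hysum : ∑ a, ∑ j ∈ y a, p j = ∑ j : I, p j := by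
    have hY : Finset.univ.biUnion y = (Finset.univ : Finset I) := by
      apply Finset.eq_univ_iff_forall.mpr
      intro j
      obtain ⟨a, ha⟩ := hycover j
      exact Finset.mem_biUnion.mpr ⟨a, Finset.mem_univ a, ha⟩
    rw [← hY, Finset.sum_biUnion]
    intro a _ a' _ h
    exact hydisj a a' h
  -- prices of unallocated items are ≤ 0
  have hprice : ∑ j : I, p j ≤ ∑ j ∈ X, p j := by
    have hsplit : ∑ j : I, p j = ∑ j ∈ X, p j + ∑ j ∈ Finset.univ \ X, p j := by
      rw [Finset.sum_sdiff_eq_sub (Finset.subset_univ X)]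
      ring
    rw [hsplit]
    have : ∑ j ∈ Finset.univ \ X, p j ≤ 0 := by
      apply Finset.sum_nonpos
      intro j hj
      by_contra hpos
      push_neg at hpos
      obtain ⟨a, ha⟩ := hclear j hpos
      have : j ∈ X := Finset.mem_biUnion.mpr ⟨a, Finset.mem_univ a, ha⟩
      simp [this] at hj
    linarith
  have hsum : ∑ a, (v a (y a) - ∑ j ∈ y a, p j)
      ≤ ∑ a, (v a (x a) - ∑ j ∈ x a, p j) :=
    Finset.sum_le_sum fun a _ => hmax a (y a)
  rw [Finset.sum_sub_distrib, Finset.sum_sub_distrib, hxsum, hysum] at hsum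
  linarith
end
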